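/- Let k be a commutative ring, H a k-algebra, and n ≥ 1. Let F_n : (ModuleCat H)^n ⥤ ModuleCat k be the functor sending an n-tuple (M₁,…,M_n) of left H-modules to the k-module M₁ ⊗_k ⋯ ⊗_k M_n (left-bracketed). Then the map from H^{⊗_k n} to the algebra of natural endomorphisms of F_n, sending x ∈ H^{⊗n} to the natural transformation whose component at (M₁,…,M_n) is the action of x (where h₁ ⊗ ⋯ ⊗ h_n acts by m₁ ⊗ ⋯ ⊗ m_n ↦ h₁m₁ ⊗ ⋯ ⊗ h_nm_n), is a k-algebra isomorphism; its inverse sends a natural endomorphism to the value of its component at (H,…,H) on the element 1 ⊗ ⋯ ⊗ 1. -/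

import Mathlib

open scoped TensorProduct

noncomputable section

universe u

variable (k : Type u) [CommRing k] (H : Type u) [Ring H] [Algebra k H]

/-- A bundled left `H`-module (with its induced `k`-module structure). -/
structure HModule where
  X : Type u
  [grp : AddCommGroup X]
  [modk : Module k X]
  [modH : Module H X]
  [tower : IsScalarTower k H X]

attribute [instance] HModule.grp HModule.modk HModule.modH HModule.tower

variable {k H} in
/-- The value of the functor `F_n`: the `n`-fold tensor power over `k` of the underlying
`k`-modules of a family of `H`-modules. -/
abbrev Tpow {n : ℕ} (M : Fin n → HModule k H) : Type u := ⨂[k] i, (M i).X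

variable {k H} in
/-- The map induced on tensor powers by a family of `H`-linear maps. -/
abbrev TpowMap {n : ℕ} {M N : Fin n → HModule k H} (f : ∀ i, (M i).X →ₗ[H] (N i).X) :
    Tpow M →ₗ[k] Tpow N :=
  PiTensorProduct.map fun i => (f i).restrictScalars k

/-- The `k`-algebra of natural endomorphisms of the functor
`(M₁,…,M_n) ↦ M₁ ⊗_k ⋯ ⊗_k M_n` from `n`-tuples of `H`-modules to `k`-modules:
families of `k`-linear endomorphisms natural with respect to all tuples of `H`-linear maps. -/
def NatEnd (n : ℕ) : Subalgebra k (∀ M : Fin n → HModule k H, Module.End k (Tpow M)) where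
  carrier := {η | ∀ (M N : Fin n → HModule k H) (f : ∀ i, (M i).X →ₗ[H] (N i).X),
    TpowMap f ∘ₗ η M = η N ∘ₗ TpowMap f}
  mul_mem' := by
    intro a b ha hb M N f
    refine LinearMap.ext fun x => ?_
    have h1 := LinearMap.congr_fun (ha M N f) ((b M) x)
    have h2 := LinearMap.congr_fun (hb M N f) x
    simp only [LinearMap.comp_apply] at h1 h2 ⊢
    simp only [Pi.mul_apply, Module.End.mul_apply]
    rw [h1, h2]
  one_mem' := by intro M N f; rfl
  add_mem' := by
    intro a b ha hb M N f
    refine LinearMap.ext fun x => ?_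
    have h1 := LinearMap.congr_fun (ha M N f) x
    have h2 := LinearMap.congr_fun (hb M N f) x
    simp only [LinearMap.comp_apply] at h1 h2 ⊢
    simp only [Pi.add_apply, LinearMap.add_apply, map_add]
    rw [h1, h2]
  zero_mem' := by
    intro M N f
    refine LinearMap.ext fun x => ?_
    simp
  algebraMap_mem' := by
    intro c M N f
    refine LinearMap.ext fun x => ?_
    simp only [LinearMap.comp_apply, Pi.algebraMap_apply, Module.algebraMap_end_apply,
      map_smul]

/-- The `H`-module `H` itself. -/
def HH : HModule k H := ⟨H⟩

/-! The tuple `(H, …, H)` with the element `1 ⊗ ⋯ ⊗ 1` represents the functor. Every pure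
tensor `m₁ ⊗ ⋯ ⊗ m_n` is the image of `1 ⊗ ⋯ ⊗ 1` under the tensor power of the `H`-linear
maps `h ↦ h • mᵢ`, and the action of `x ∈ H^{⊗n}` on it is the image of `x` under that same
map. Hence the action of any `x` is natural, and naturality forces a natural endomorphism `η`
to be the action of its value `x` at `(H, …, H)` on `1 ⊗ ⋯ ⊗ 1`. -/

namespace PiTensorProduct

variable {R : Type*} [CommSemiring R] {ι : Type*}
  {A : ι → Type*} [∀ i, Semiring (A i)] [∀ i, Algebra R (A i)]
  {M : ι → Type*} [∀ i, AddCommMonoid (M i)] [∀ i, Module R (M i)]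
  [∀ i, Module (A i) (M i)] [∀ i, IsScalarTower R (A i) (M i)]

variable (R M) in
def actionAlgHom : (⨂[R] i, A i) →ₐ[R] Module.End R (⨂[R] i, M i) :=
  liftAlgHom
    ((mapMultilinear R M M).compLinearMap fun i => (Algebra.lsmul R R (M i)).toLinearMap)
    (by simp) (fun x y => by ext m; simp)

@[simp]
theorem actionAlgHom_tprod_tprod (a : ∀ i, A i) (m : ∀ i, M i) :
    actionAlgHom R M (tprod R a) (tprod R m) = tprod R fun i => a i • m i := by
  simp [actionAlgHom]

theorem actionAlgHom_apply_tprod (x : ⨂[R] i, A i) (m : ∀ i, M i) :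
    actionAlgHom R M x (tprod R m) =
      map (fun i => (LinearMap.toSpanSingleton (A i) (M i) (m i)).restrictScalars R) x := by
  induction x using PiTensorProduct.induction_on with
  | smul_tprod r a => simp
  | add x y hx hy => simp [hx, hy]

end PiTensorProduct

section

variable {k H} {n : ℕ}

/-- `LinearMap.toSpanSingleton`, typed as a map out of `HH k H`: `HH` is not reducible, so
terms typed over `H` do not fit `TpowMap` at instance transparency. -/
def orbitMap (M : HModule k H) (m : M.X) : (HH k H).X →ₗ[H] M.X :=
  LinearMap.toSpanSingleton H M.X m

theorem comp_orbitMap {M N : HModule k H} (f : M.X →ₗ[H] N.X) (m : M.X) :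
    f ∘ₗ orbitMap M m = orbitMap N (f m) :=
  LinearMap.comp_toSpanSingleton f m

theorem orbitMap_one : orbitMap (HH k H) (1 : H) = LinearMap.id :=
  LinearMap.ext fun (h : H) => mul_one h

theorem tpowMap_comp {L M N : Fin n → HModule k H} (f : ∀ i, (M i).X →ₗ[H] (N i).X)
    (g : ∀ i, (L i).X →ₗ[H] (M i).X) :
    TpowMap f ∘ₗ TpowMap g = TpowMap fun i => f i ∘ₗ g i :=
  (PiTensorProduct.map_comp _ _).symm

theorem tpowMap_orbitMap_tprod_one {M : Fin n → HModule k H} (m : ∀ i, (M i).X) :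
    TpowMap (fun i => orbitMap (M i) (m i)) (PiTensorProduct.tprod k fun _ => (1 : H)) =
      PiTensorProduct.tprod k m :=
  (PiTensorProduct.map_tprod _ _).trans (congrArg _ (funext fun i => one_smul H (m i)))

def tpowAction :
    (⨂[k] _ : Fin n, H) →ₐ[k] ∀ M : Fin n → HModule k H, Module.End k (Tpow M) :=
  AlgHom.pi fun M => PiTensorProduct.actionAlgHom k fun i => (M i).X

theorem tpowAction_apply_tprod {M : Fin n → HModule k H} (x : ⨂[k] _ : Fin n, H)
    (m : ∀ i, (M i).X) :
    tpowAction x M (PiTensorProduct.tprod k m) = TpowMap (fun i => orbitMap (M i) (m i)) x :=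
  PiTensorProduct.actionAlgHom_apply_tprod x m

theorem tpowAction_mem_natEnd (x : ⨂[k] _ : Fin n, H) : tpowAction x ∈ NatEnd k H n := by
  intro M N f
  ext m
  calc TpowMap f (tpowAction x M (PiTensorProduct.tprod k m))
      = (TpowMap f ∘ₗ TpowMap fun i => orbitMap (M i) (m i)) x := by
        rw [tpowAction_apply_tprod]; rfl
    _ = TpowMap (fun i => orbitMap (N i) (f i (m i))) x := by
        simp only [tpowMap_comp, comp_orbitMap]
    _ = tpowAction x N (TpowMap f (PiTensorProduct.tprod k m)) := by
        rw [PiTensorProduct.map_tprod, tpowAction_apply_tprod]; rfl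

theorem tpowAction_apply_tprod_one (x : ⨂[k] _ : Fin n, H) :
    tpowAction x (fun _ => HH k H) (PiTensorProduct.tprod k fun _ => (1 : H)) = x := by
  refine (tpowAction_apply_tprod x _).trans ?_
  rw [orbitMap_one]
  exact congrArg (· x) PiTensorProduct.map_id

def natEndEval (η : NatEnd k H n) : ⨂[k] _ : Fin n, H :=
  η.val (fun _ => HH k H) (PiTensorProduct.tprod k fun _ => (1 : H))

def toNatEnd : (⨂[k] _ : Fin n, H) →ₐ[k] NatEnd k H n :=
  tpowAction.codRestrict _ tpowAction_mem_natEnd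

theorem natEndEval_toNatEnd (x : ⨂[k] _ : Fin n, H) : natEndEval (toNatEnd x) = x :=
  tpowAction_apply_tprod_one x

theorem toNatEnd_natEndEval (η : NatEnd k H n) : toNatEnd (natEndEval η) = η := by
  refine Subtype.ext (funext fun M => PiTensorProduct.ext (MultilinearMap.ext fun m => ?_))
  have h := LinearMap.congr_fun (η.2 _ M fun i => orbitMap (M i) (m i))
    (PiTensorProduct.tprod k fun _ => (1 : H))
  simp only [LinearMap.comp_apply, tpowMap_orbitMap_tprod_one] at h
  exact (tpowAction_apply_tprod _ m).trans h

def natEndEquiv : (⨂[k] _ : Fin n, H) ≃ₐ[k] NatEnd k H n :=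
  { toNatEnd with
    invFun := natEndEval
    left_inv := natEndEval_toNatEnd
    right_inv := toNatEnd_natEndEval }

end

theorem tensor_power_endomorphisms_of_forgetful_functor
    (n : ℕ) :
    ∃ iso : (⨂[k] (_ : Fin n), H) ≃ₐ[k] NatEnd k H n,
      (∀ (h : Fin n → H) (M : Fin n → HModule k H) (m : ∀ i, (M i).X),
        ((iso (PiTensorProduct.tprod k h)).val M) (PiTensorProduct.tprod k m)
          = PiTensorProduct.tprod k fun i => h i • m i) ∧
      (∀ η : NatEnd k H n,
        iso.symm η
          = (η.val fun _ => HH k H) (PiTensorProduct.tprod k fun _ => (1 : H))) :=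
  ⟨natEndEquiv, fun h _ m => PiTensorProduct.actionAlgHom_tprod_tprod h m, fun _ => rfl⟩

end
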